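/- Let p be a real number with 0 < p < 1 and let a be a real number with 0 < a < π/6 and sin(a) = (√3/2) · p/√(1 + p + p²). Then sin²(a) · sin(2a) / (cos²(a + π/6) · cos(2a − π/6)) = p³(2 + p)/(1 + 2p). -/

import Mathlib

open Real

theorem stmt_19 (p a : ℝ) (hp : 0 < p) (hp' : p < 1)
    (ha : 0 < a) (ha' : a < π / 6)
    (hsin : sin a = (Real.sqrt 3 / 2) * (p / Real.sqrt (1 + p + p ^ 2))) :
    sin a ^ 2 * sin (2 * a) / (cos (a + π / 6) ^ 2 * cos (2 * a - π / 6)) =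
      p ^ 3 * (2 + p) / (1 + 2 * p) := by
  have hq : (0:ℝ) < 1 + p + p ^ 2 := by nlinarith
  set sq := Real.sqrt (1 + p + p ^ 2) with hsqdef
  have hsq : 0 < sq := Real.sqrt_pos.2 hq
  have hsq2 : sq ^ 2 = 1 + p + p ^ 2 := Real.sq_sqrt hq.le
  have hs3 : (0:ℝ) < Real.sqrt 3 := by positivity
  have hs32 : Real.sqrt 3 ^ 2 = 3 := Real.sq_sqrt (by norm_num)
  have hpi : (0:ℝ) < π := Real.pi_pos
  have hcosa : cos a = (1 + p / 2) / sq := by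
    have hc2 : cos a ^ 2 = ((1 + p / 2) / sq) ^ 2 := by
      have h := Real.sin_sq_add_cos_sq a
      rw [hsin] at h
      field_simp at h ⊢
      nlinarith [h, hsq2, hs32, hsq]
    have hpos : 0 < cos a := Real.cos_pos_of_mem_Ioo
      ⟨by linarith, by linarith [Real.pi_pos]⟩
    have := Real.sqrt_sq hpos.le
    rw [← this, hc2, Real.sqrt_sq (by positivity)]
  have hsin2 : sin a ^ 2 = 3 / 4 * p ^ 2 / (1 + p + p ^ 2) := by
    rw [hsin, mul_pow, div_pow, div_pow, hsq2, hs32]; ring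
  have hcos2 : cos a ^ 2 = (1 + p / 2) ^ 2 / (1 + p + p ^ 2) := by
    rw [hcosa, div_pow, hsq2]
  have h1 : cos (a + π / 6) ^ 2 = 3 / 4 / (1 + p + p ^ 2) := by
    have e : cos (a + π / 6) = (Real.sqrt 3 / 2) / sq := by
      rw [Real.cos_add, Real.cos_pi_div_six, Real.sin_pi_div_six, hsin, hcosa]
      field_simp
      ring
    rw [e, div_pow, div_pow, hsq2, hs32]; norm_num
  have h3 : sin (2 * a) = Real.sqrt 3 * p * (1 + p / 2) / (1 + p + p ^ 2) := by
    rw [Real.sin_two_mul, hsin, hcosa, ← hsq2]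
    field_simp
  have h2 : cos (2 * a - π / 6) = (Real.sqrt 3 / 2) * (1 + 2 * p) / (1 + p + p ^ 2) := by
    rw [Real.cos_sub, Real.cos_pi_div_six, Real.sin_pi_div_six, Real.cos_two_mul, hcos2, h3]
    have h12p : (0:ℝ) < 1 + 2 * p := by linarith
    field_simp
    ring
  rw [hsin2, h1, h2, h3]
  have h12p : (0:ℝ) < 1 + 2 * p := by linarith
  field_simp
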